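/- In a constrained potential game with potential φ : A → ℝ, fix an action profile a and two distinct agents i and j such that i is uncoupled from {j} at a and j is uncoupled from {i} at a. Then for any a_i' ∈ C_i(a) and a_j' ∈ C_j(a), the change in potential from the simultaneous deviation equals the sum of the individual changes: φ(a_i', a_j', a_{−ij}) − φ(a) = [φ(a_i', a_j, a_{−ij}) − φ(a)] + [φ(a_i, a_j', a_{−ij}) − φ(a)], provided a_i' ∈ C_i(a_i, a_j', a_{−ij}). -/
import Mathlib


open Classical

variable {I : Type*} [DecidableEq I] {A : I → Type*}

noncomputable def patch (a b : ∀ i, A i) (J : Set I) : ∀ i, A i :=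
  fun i => if i ∈ J then b i else a i

/-- Agent `i` is uncoupled from the set of agents `J` at action profile `a`. -/
def Uncoupled (U : ∀ i : I, (∀ j, A j) → ℝ) (C : ∀ i : I, (∀ j, A j) → Set (A i))
    (i : I) (J : Set I) (a : ∀ j, A j) : Prop :=
  ∀ b : ∀ j, A j, b i ∈ C i a → (∀ j ∈ J, b j ∈ C j a) →
    U i (patch a b ({i} ∪ J)) = U i (patch a b {i}) ∧
    C i (patch a b ({i} ∪ J)) = C i (patch a b {i})

/-- `φ` is an exact potential for the constrained game `(U, C)`. -/
def IsConstrainedPotential (U : ∀ i : I, (∀ j, A j) → ℝ)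
    (C : ∀ i : I, (∀ j, A j) → Set (A i)) (φ : (∀ j, A j) → ℝ) : Prop :=
  ∀ (i : I) (a : ∀ j, A j), ∀ ai' ∈ C i a,
    U i (Function.update a i ai') - U i a = φ (Function.update a i ai') - φ a

theorem stmt_11 (U : ∀ i : I, (∀ j, A j) → ℝ) (C : ∀ i : I, (∀ j, A j) → Set (A i))
    (φ : (∀ j, A j) → ℝ)
    (hC : ∀ (j : I) (a : ∀ k, A k), a j ∈ C j a)
    (hφ : IsConstrainedPotential U C φ)
    (a : ∀ j, A j) (i j : I) (hij : i ≠ j)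
    (hui : Uncoupled U C i {j} a) (huj : Uncoupled U C j {i} a)
    (ai' : A i) (aj' : A j) (hai : ai' ∈ C i a) (haj : aj' ∈ C j a)
    (hfeas : ai' ∈ C i (Function.update a j aj')) :
    φ (Function.update (Function.update a j aj') i ai') - φ a =
      (φ (Function.update a i ai') - φ a) + (φ (Function.update a j aj') - φ a) := by
  set b : ∀ k, A k := Function.update (Function.update a j aj') i ai' with hb
  have hbi : b i = ai' := Function.update_self _ _ _
  have hbj : b j = aj' := by
    rw [hb, Function.update_of_ne (Ne.symm hij), Function.update_self]
  -- first use of uncoupledness, with b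
  have h1 := hui b (by rw [hbi]; exact hai)
      (by intro k hk; rcases hk with rfl; rw [hbj]; exact haj)
  have e1 : patch a b ({i} ∪ {j}) = b := by
    funext k
    by_cases hk : k ∈ ({i} ∪ {j} : Set I)
    · simp only [patch, if_pos hk]
    · have hki : k ≠ i := by rintro rfl; exact hk (Or.inl rfl)
      have hkj : k ≠ j := by rintro rfl; exact hk (Or.inr rfl)
      simp [patch, hk, hb, Function.update_of_ne hki, Function.update_of_ne hkj]
  have e2 : patch a b {i} = Function.update a i ai' := by
    funext k
    by_cases hk : k = i
    · subst hk; simp [patch, hbi]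
    · simp [patch, hk, Function.update_of_ne hk]
  -- second use of uncoupledness, with b' = update a j aj'
  set b' : ∀ k, A k := Function.update a j aj' with hb'
  have hbi' : b' i = a i := Function.update_of_ne hij _ _
  have h2 := hui b' (by rw [hbi']; exact hC i a)
      (by intro k hk; rcases hk with rfl; simpa [hb'] using haj)
  have e3 : patch a b' ({i} ∪ {j}) = b' := by
    funext k
    by_cases hk : k ∈ ({i} ∪ {j} : Set I)
    · simp only [patch, if_pos hk]
    · have hkj : k ≠ j := by rintro rfl; exact hk (Or.inr rfl)
      simp [patch, hk, hb', Function.update_of_ne hkj]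
  have e4 : patch a b' {i} = a := by
    funext k
    by_cases hk : k = i
    · subst hk; simp [patch, hbi']
    · simp [patch, Set.mem_singleton_iff, hk]
  rw [e1, e2] at h1
  rw [e3, e4] at h2
  have key1 := hφ i b' ai' hfeas
  have key2 := hφ i a ai' hai
  have hbb : Function.update b' i ai' = b := rfl
  rw [hbb] at key1
  have : φ b - φ b' = φ (Function.update a i ai') - φ a := by
    rw [← key1, ← key2, h1.1, h2.1]
  linarith
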